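/- Let A be a topological abelian group in the class ℰ. Then for every positive integer n, the natural map A → A_∧ := lim_{m≥1} A/mA restricts to an isomorphism from the n-torsion subgroup _n A onto the n-torsion subgroup _n(A_∧). (Claim used in the proof of Theorem 'refin1' b): since H^1_c(U,𝒞) is in the class ℰ, the ℓ^m-torsion of H^1_c(U,𝒞) and of H^1_c(U,𝒞)_∧ coincide.) -/

import Mathlib

/-- The subgroup `nA = {n·a : a ∈ A}` of an abelian group `A`. -/
def nSub (A : Type*) [AddCommGroup A] (n : ℕ) : AddSubgroup A where
  carrier := Set.range fun a : A => n • a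
  zero_mem' := ⟨0, smul_zero n⟩
  add_mem' := by rintro x y ⟨a, rfl⟩ ⟨b, rfl⟩; exact ⟨a + b, smul_add n a b⟩
  neg_mem' := by rintro x ⟨a, rfl⟩; exact ⟨-a, smul_neg n a⟩

theorem nSub_le {A : Type*} [AddCommGroup A] {n m : ℕ} (h : n ∣ m) :
    nSub A m ≤ nSub A n := by
  rintro x ⟨a, rfl⟩
  obtain ⟨c, rfl⟩ := h
  exact ⟨c • a, (mul_smul n c a).symm⟩

/-- The natural projection `A/mA → A/nA` when `n ∣ m`. -/
def projMap {A : Type*} [AddCommGroup A] {n m : ℕ} (h : n ∣ m) :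
    A ⧸ nSub A m →+ A ⧸ nSub A n :=
  QuotientAddGroup.map _ _ (AddMonoidHom.id A) fun _x hx => nSub_le h hx

/-- The completion `A_∧ = lim_{n ≥ 1} A/nA`, the inverse limit over positive integers
ordered by divisibility, as the subgroup of compatible families. -/
def ComplNA (A : Type*) [AddCommGroup A] :
    AddSubgroup (∀ n : ℕ+, A ⧸ nSub A (n : ℕ)) where
  carrier := {f | ∀ (n m : ℕ+) (h : (n : ℕ) ∣ (m : ℕ)), projMap h (f m) = f n}
  zero_mem' := fun _n _m _h => map_zero _
  add_mem' := by
    intro f g hf hg n m h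
    simp only [Pi.add_apply, map_add, hf n m h, hg n m h]
  neg_mem' := by
    intro f hf n m h
    simp only [Pi.neg_apply, map_neg, hf n m h]

/-- The natural map `A → A_∧` sending `a` to its family of residues. -/
def toCompl (A : Type*) [AddCommGroup A] : A →+ ↥(ComplNA A) where
  toFun a := ⟨fun _n => QuotientAddGroup.mk a, fun _n _m _h => rfl⟩
  map_zero' := rfl
  map_add' _a _b := rfl

/-- A topological abelian group `A` belongs to the class ℰ if it admits a closed
subgroup `P` which is profinite (compact, Hausdorff and totally disconnected) such
that the quotient `A ⧸ P`, with the quotient topology, is discrete and finitely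
generated. -/
def IsClassE (A : Type*) [AddCommGroup A] [TopologicalSpace A] : Prop :=
  ∃ P : AddSubgroup A, IsClosed (P : Set A) ∧ CompactSpace P ∧ T2Space P ∧
    TotallyDisconnectedSpace P ∧ DiscreteTopology (A ⧸ P) ∧ AddGroup.FG (A ⧸ P)

/-!
Fix `P` as in the definition of ℰ. The torsion subgroup of the finitely generated group `A/P`
is finite, so each `A[k]` is closed and lies in finitely many cosets of the compact group `P`,
hence is compact.

Injectivity: let `d ∈ A[n]` be divisible by every `m`, and let `e` be the exponent of the torsion
of `A/P`. Writing `d = (me)•a`, the class of `a` is torsion, so `e•a ∈ P` and `d` is divisible by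
every `m` inside `P`. Every open subgroup of the profinite group `P` has finite index `k`, hence
contains `k•P`; so `d` lies in all open subgroups of `P`, i.e. `d = 0`.

Surjectivity: for `y ∈ A_∧[n]` the `n`-torsion lifts of `y_m` form a coset of `m•A[nm]`, a compact
set, and they are nested along divisibility; a common point of all of them maps to `y`.
-/

open Set

theorem AddCommGroup.finite_torsion (G : Type*) [AddCommGroup G] [AddGroup.FG G] :
    Finite (AddCommGroup.torsion G) := by
  have : Module.Finite ℤ G := Module.Finite.iff_addGroup_fg.mpr ‹_›
  have : AddGroup.FG (AddCommGroup.torsion G) := by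
    rw [← Submodule.torsion_int]
    exact Module.Finite.iff_addGroup_fg.mp
      (inferInstance : Module.Finite ℤ (Submodule.torsion ℤ G))
  exact AddCommGroup.finite_of_fg_isAddTorsion _ (AddCommMonoid.addTorsion.isAddTorsion (G := G))

theorem AddSubgroup.t1Space_of_isClosed {A : Type*} [AddGroup A] [TopologicalSpace A]
    [IsTopologicalAddGroup A] {P : AddSubgroup A} (hP : IsClosed (P : Set A)) [T1Space P] :
    T1Space A :=
  IsTopologicalAddGroup.t1Space A <| by
    simpa using hP.isClosedEmbedding_subtypeVal.isClosedMap _ (isClosed_singleton (x := (0 : P)))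

theorem eq_zero_of_forall_exists_nsmul_eq {G : Type*} [AddCommGroup G] [TopologicalSpace G]
    [IsTopologicalAddGroup G] [CompactSpace G] [T2Space G] [TotallyDisconnectedSpace G] {d : G}
    (hd : ∀ m : ℕ, 0 < m → ∃ p : G, m • p = d) : d = 0 := by
  have : TotallySeparatedSpace G := loc_compact_t2_tot_disc_iff_tot_sep.mp ‹_›
  by_contra hd0
  obtain ⟨V, hV, h0V, hdV⟩ := exists_isClopen_of_totally_separated (Ne.symm hd0)
  obtain ⟨U, hUV⟩ := IsTopologicalAddGroup.exist_openAddSubgroup_sub_clopen_nhds_of_zero hV h0V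
  have : Finite (G ⧸ U.toAddSubgroup) := U.toAddSubgroup.quotient_finite_of_isOpen U.isOpen
  obtain ⟨p, rfl⟩ := hd (Nat.card (G ⧸ U.toAddSubgroup)) Nat.card_pos
  refine hdV (hUV ?_)
  rw [SetLike.mem_coe, OpenAddSubgroup.mem_toAddSubgroup.symm, ← QuotientAddGroup.eq_zero_iff,
    QuotientAddGroup.mk_nsmul]
  exact card_nsmul_eq_zero'

theorem exists_mem_nsmul_eq_of_forall_mem_nSub {A : Type*} [AddCommGroup A] {P : AddSubgroup A}
    [Finite (AddCommGroup.torsion (A ⧸ P))] {n : ℕ} (hn : 0 < n) {d : A} (hdn : n • d = 0)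
    (hd : ∀ m : ℕ, 0 < m → d ∈ nSub A m) {m : ℕ} (hm : 0 < m) : ∃ p ∈ P, m • p = d := by
  set e := AddMonoid.exponent (AddCommGroup.torsion (A ⧸ P))
  have he : 0 < e := Nat.pos_of_ne_zero AddMonoid.exponent_ne_zero_of_finite
  obtain ⟨a, ha⟩ := hd (m * e) (Nat.mul_pos hm he)
  replace ha : (m * e) • a = d := ha
  have htors : IsOfFinAddOrder (a : A ⧸ P) := by
    refine isOfFinAddOrder_iff_nsmul_eq_zero.mpr ⟨n * (m * e), by positivity, ?_⟩
    rw [← QuotientAddGroup.mk_nsmul, mul_smul, ha, hdn, QuotientAddGroup.mk_zero]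
  have hea : e • (a : A ⧸ P) = 0 :=
    congrArg Subtype.val (AddMonoid.exponent_nsmul_eq_zero
      (⟨_, htors⟩ : AddCommGroup.torsion (A ⧸ P)))
  refine ⟨e • a, ?_, by rw [← mul_smul, ha]⟩
  rwa [← QuotientAddGroup.eq_zero_iff, QuotientAddGroup.mk_nsmul]

section Compactness

variable {A : Type*} [AddCommGroup A] [TopologicalSpace A] [IsTopologicalAddGroup A]
  {P : AddSubgroup A}

theorem QuotientAddGroup.isCompact_preimage_mk (hP : IsCompact (P : Set A))
    {T : Set (A ⧸ P)} (hT : T.Finite) : IsCompact (QuotientAddGroup.mk ⁻¹' T) := by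
  have hT' : T = QuotientAddGroup.mk '' (Quotient.out '' T) := by
    rw [image_image]; simp
  rw [hT', QuotientAddGroup.preimage_image_mk_eq_add]
  exact (hT.image _).isCompact.add hP

theorem isCompact_setOf_nsmul_eq_zero [T1Space A] (hP : IsCompact (P : Set A))
    [Finite (AddCommGroup.torsion (A ⧸ P))] {k : ℕ} (hk : 0 < k) :
    IsCompact {a : A | k • a = 0} := by
  have hT : {g : A ⧸ P | k • g = 0}.Finite :=
    (toFinite (AddCommGroup.torsion (A ⧸ P) : Set (A ⧸ P))).subset fun g hg =>
      isOfFinAddOrder_iff_nsmul_eq_zero.mpr ⟨k, hk, hg⟩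
  refine (QuotientAddGroup.isCompact_preimage_mk hP hT).of_isClosed_subset
    (isClosed_singleton.preimage (continuous_nsmul k)) fun a (ha : k • a = 0) => ?_
  show k • (a : A ⧸ P) = 0
  rw [← QuotientAddGroup.mk_nsmul, ha, QuotientAddGroup.mk_zero]

end Compactness

theorem nsmul_mem_nSub {A : Type*} [AddCommGroup A] (n : ℕ) (a : A) : n • a ∈ nSub A n :=
  ⟨a, rfl⟩

namespace ComplNA

variable {A : Type*} [AddCommGroup A]

theorem mk_eq_of_dvd (y : ComplNA A) {m m' : ℕ+} (h : (m : ℕ) ∣ m') {a : A}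
    (ha : (a : A ⧸ nSub A m') = y.1 m') : (a : A ⧸ nSub A m) = y.1 m := by
  rw [← y.2 m m' h, ← ha]
  rfl

theorem nsmul_apply (y : ComplNA A) (n : ℕ) (m : ℕ+) : (n • y).1 m = n • y.1 m := rfl

def torsionFiber (y : ComplNA A) (n : ℕ) (m : ℕ+) : Set A :=
  {c | n • c = 0 ∧ (c : A ⧸ nSub A m) = y.1 m}

variable {y : ComplNA A} {n : ℕ}

/-- Lift the component at `nm` and correct the lift by an element of `mA`. -/
theorem torsionFiber_nonempty (hn : 0 < n) (hy : n • y = 0) (m : ℕ+) :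
    (torsionFiber y n m).Nonempty := by
  set N : ℕ+ := ⟨n, hn⟩ * m
  obtain ⟨a, ha⟩ : ∃ a : A, (a : A ⧸ nSub A N) = y.1 N := QuotientAddGroup.mk_surjective _
  have hna : n • a ∈ nSub A N := by
    rw [← QuotientAddGroup.eq_zero_iff, QuotientAddGroup.mk_nsmul, ha, ← nsmul_apply, hy]
    rfl
  obtain ⟨b, hb⟩ := hna
  replace hb : (n * m) • b = n • a := hb
  refine ⟨a - (m : ℕ) • b, ?_, ?_⟩
  · rw [smul_sub, ← mul_smul, hb, sub_self]
  · rw [QuotientAddGroup.mk_sub, (QuotientAddGroup.eq_zero_iff _).mpr (nsmul_mem_nSub _ b),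
      sub_zero]
    exact mk_eq_of_dvd y (dvd_mul_left _ _) ha

theorem torsionFiber_eq_image {m : ℕ+} {c : A} (hc : c ∈ torsionFiber y n m) :
    torsionFiber y n m = (c + ·) '' ((fun a => (m : ℕ) • a) '' {a | (n * m) • a = 0}) := by
  ext x
  constructor
  · rintro ⟨hx, hxm⟩
    obtain ⟨a, ha⟩ : x - c ∈ nSub A m := QuotientAddGroup.eq_iff_sub_mem.mp (hxm.trans hc.2.symm)
    replace ha : (m : ℕ) • a = x - c := ha
    refine ⟨(m : ℕ) • a, ⟨a, ?_, rfl⟩, ?_⟩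
    · show (n * m) • a = 0
      rw [mul_smul, ha, smul_sub, hx, hc.1, sub_zero]
    · show c + (m : ℕ) • a = x
      rw [ha, add_sub_cancel]
  · rintro ⟨_, ⟨a, ha, rfl⟩, rfl⟩
    refine ⟨?_, ?_⟩
    · rw [smul_add, hc.1, zero_add, ← mul_smul]
      exact ha
    · rw [QuotientAddGroup.mk_add, (QuotientAddGroup.eq_zero_iff _).mpr (nsmul_mem_nSub _ a),
        add_zero, hc.2]

theorem torsionFiber_subset_of_dvd {m m' : ℕ+} (h : (m : ℕ) ∣ m') :
    torsionFiber y n m' ⊆ torsionFiber y n m :=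
  fun _ hc => ⟨hc.1, mk_eq_of_dvd y h hc.2⟩

end ComplNA

open ComplNA

theorem toCompl_eq_zero_iff {A : Type*} [AddCommGroup A] {a : A} :
    toCompl A a = 0 ↔ ∀ m : ℕ, 0 < m → a ∈ nSub A m := by
  refine ⟨fun h m hm => ?_, fun h => Subtype.ext (funext fun m => ?_)⟩
  · exact (QuotientAddGroup.eq_zero_iff a).mp (congrArg (fun y => y.1 ⟨m, hm⟩) h)
  · exact (QuotientAddGroup.eq_zero_iff a).mpr (h m m.pos)

section Torsion

variable {A : Type*} [AddCommGroup A] [TopologicalSpace A] [IsTopologicalAddGroup A] {n : ℕ}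

theorem injOn_toCompl_of_profinite {P : AddSubgroup A} [CompactSpace P] [T2Space P]
    [TotallyDisconnectedSpace P] [Finite (AddCommGroup.torsion (A ⧸ P))] (hn : 0 < n) :
    InjOn (toCompl A) {x | n • x = 0} := by
  intro a (ha : n • a = 0) b (hb : n • b = 0) hab
  have hd := (toCompl_eq_zero_iff (a := a - b)).mp (by rw [map_sub, hab, sub_self])
  have hdn : n • (a - b) = 0 := by rw [smul_sub, ha, hb, sub_self]
  have hdP : a - b ∈ P := by
    obtain ⟨p, hp, hpd⟩ := exists_mem_nsmul_eq_of_forall_mem_nSub (P := P) hn hdn hd one_pos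
    rwa [← hpd, one_smul]
  rw [← sub_eq_zero]
  suffices (⟨a - b, hdP⟩ : P) = 0 from congrArg Subtype.val this
  refine eq_zero_of_forall_exists_nsmul_eq fun m hm => ?_
  obtain ⟨p, hp, hpd⟩ := exists_mem_nsmul_eq_of_forall_mem_nSub (P := P) hn hdn hd hm
  exact ⟨⟨p, hp⟩, Subtype.ext hpd⟩

theorem surjOn_toCompl_of_isCompact [T2Space A]
    (hcpt : ∀ k : ℕ, 0 < k → IsCompact {a : A | k • a = 0}) (hn : 0 < n) :
    SurjOn (toCompl A) {x | n • x = 0} {y | n • y = 0} := by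
  intro y (hy : n • y = 0)
  have hfib : ∀ m, IsCompact (torsionFiber y n m) := fun m => by
    obtain ⟨c, hc⟩ := torsionFiber_nonempty hn hy m
    rw [torsionFiber_eq_image hc]
    exact ((hcpt _ (by positivity)).image (continuous_nsmul _)).image (continuous_const_add c)
  have hdir : Directed (· ⊇ ·) (torsionFiber y n) := fun m m' =>
    ⟨m * m', torsionFiber_subset_of_dvd (by simp), torsionFiber_subset_of_dvd (by simp)⟩
  obtain ⟨c, hc⟩ := IsCompact.nonempty_iInter_of_directed_nonempty_isCompact_isClosed _ hdir
    (torsionFiber_nonempty hn hy) hfib fun m => (hfib m).isClosed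
  rw [mem_iInter] at hc
  exact ⟨c, (hc 1).1, Subtype.ext (funext fun m => (hc m).2)⟩

end Torsion

/-- If `A` is a topological abelian group in the class ℰ, then for every positive
integer `n` the natural map `A → A_∧` restricts to a bijection from the `n`-torsion
subgroup of `A` onto the `n`-torsion subgroup of `A_∧`. -/
theorem statement_17 (A : Type*) [AddCommGroup A] [TopologicalSpace A]
    [IsTopologicalAddGroup A] (hA : IsClassE A) (n : ℕ) (hn : 0 < n) :
    Set.BijOn (⇑(toCompl A)) {x : A | n • x = 0} {y : ↥(ComplNA A) | n • y = 0} := by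
  obtain ⟨P, hPc, _, _, _, -, _⟩ := hA
  have : T1Space A := AddSubgroup.t1Space_of_isClosed hPc
  have := AddCommGroup.finite_torsion (A ⧸ P)
  have hPcpt : IsCompact (P : Set A) := isCompact_iff_compactSpace.mpr ‹_›
  refine ⟨fun x (hx : n • x = 0) => ?_, injOn_toCompl_of_profinite (P := P) hn,
    surjOn_toCompl_of_isCompact (fun k => isCompact_setOf_nsmul_eq_zero hPcpt) hn⟩
  show n • toCompl A x = 0
  rw [← map_nsmul, hx, map_zero]
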